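/- Let n ≥ 1 and let A ∈ ℂ^{n×n} be Hermitian with largest eigenvalue λmax(A). Then the quantity sup{‖exp(Y) − exp(A)‖₂ : Y Hermitian, ‖Y − A‖₂ ≤ ε}/ε tends to e^{λmax(A)} as ε → 0⁺; that is, the structured level-1 condition number of the matrix exponential at A in the spectral norm, with perturbations restricted to Hermitian matrices, equals e^{λmax(A)}. -/

import Mathlib

/-!
Along the path `s ↦ exp (s • b) * exp ((1 - s) • a)` the derivative is
`exp (s • b) * (b - a) * exp ((1 - s) • a)`. For self-adjoint `x ≤ c` one has `‖exp x‖ ≤ e^c`,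
and `b ≤ λmax(a) + ‖b - a‖` (Weyl), so `‖exp b - exp a‖ ≤ ‖b - a‖ e^{λmax(a) + ‖b - a‖}`.
The shift `b = a + ε` attains `(e^ε - 1) ‖exp a‖ = (e^ε - 1) e^{λmax(a)}`, and dividing by `ε`
squeezes the quotient to `e^{λmax(a)}` as `ε → 0⁺`. The argument works verbatim for self-adjoint
elements of any unital C⋆-algebra, with `λmax(a)` the top of the real spectrum.
-/

open Filter Topology NormedSpace
open scoped Matrix.Norms.L2Operator MatrixOrder

theorem Real.tendsto_exp_sub_one_div :
    Tendsto (fun x : ℝ => (Real.exp x - 1) / x) (𝓝[≠] 0) (𝓝 1) := by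
  simpa [slope_fun_def_field] using hasDerivAt_iff_tendsto_slope.mp (Real.hasDerivAt_exp 0)

section BanachAlgebra

variable {𝔸 : Type*} [NormedRing 𝔸] [NormedAlgebra ℝ 𝔸] [CompleteSpace 𝔸]

theorem hasDerivAt_exp_smul_mul_exp_one_sub_smul (a b : 𝔸) (s : ℝ) :
    HasDerivAt (fun t : ℝ => exp (t • b) * exp ((1 - t) • a))
      (exp (s • b) * (b - a) * exp ((1 - s) • a)) s := by
  have ha : HasDerivAt (fun t : ℝ => exp ((1 - t) • a)) (-(a * exp ((1 - s) • a))) s := by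
    simpa [Function.comp_def] using (hasDerivAt_exp_smul_const' (𝕂 := ℝ) a (1 - s)).scomp s
      ((hasDerivAt_id s).const_sub 1)
  refine ((hasDerivAt_exp_smul_const (𝕂 := ℝ) b s).mul ha).congr_deriv ?_
  noncomm_ring

theorem norm_exp_sub_exp_le {a b : 𝔸} {C : ℝ}
    (h : ∀ s ∈ Set.Icc (0 : ℝ) 1, ‖exp (s • b)‖ * ‖exp ((1 - s) • a)‖ ≤ C) :
    ‖exp b - exp a‖ ≤ ‖b - a‖ * C := by
  have hderiv : ∀ s ∈ Set.Ico (0 : ℝ) 1,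
      ‖exp (s • b) * (b - a) * exp ((1 - s) • a)‖ ≤ ‖b - a‖ * C := fun s hs =>
    calc _ ≤ ‖exp (s • b)‖ * ‖b - a‖ * ‖exp ((1 - s) • a)‖ := norm_mul₃_le
      _ = ‖b - a‖ * (‖exp (s • b)‖ * ‖exp ((1 - s) • a)‖) := by ring
      _ ≤ ‖b - a‖ * C := by gcongr; exact h s (Set.Ico_subset_Icc_self hs)
  simpa using norm_image_sub_le_of_norm_deriv_le_segment'
    (fun s _ => (hasDerivAt_exp_smul_mul_exp_one_sub_smul a b s).hasDerivWithinAt)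
    hderiv 1 (Set.right_mem_Icc.mpr zero_le_one)

theorem norm_exp_add_algebraMap_sub_exp (a : 𝔸) (ε : ℝ) :
    ‖exp (a + algebraMap ℝ 𝔸 ε) - exp a‖ = |Real.exp ε - 1| * ‖exp a‖ := by
  let +nondep : NormedAlgebra ℚ 𝔸 := .restrictScalars ℚ ℝ 𝔸
  rw [exp_add_of_commute (Algebra.commutes ε a).symm, ← algebraMap_exp_comm, ← Real.exp_eq_exp_ℝ,
    ← Algebra.commutes, ← Algebra.smul_def, ← Real.norm_eq_abs, ← norm_smul, sub_smul, one_smul]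

end BanachAlgebra

section CStarAlgebra

variable {𝔸 : Type*} [CStarAlgebra 𝔸]

theorem IsSelfAdjoint.exp_le_norm_exp [Nontrivial 𝔸] {a : 𝔸} (ha : IsSelfAdjoint a) {x : ℝ}
    (hx : x ∈ spectrum ℝ a) : Real.exp x ≤ ‖NormedSpace.exp a‖ := by
  have hmem : Real.exp x ∈ spectrum ℝ (NormedSpace.exp a) := by
    rw [← CFC.real_exp_eq_normedSpace_exp ha, cfc_map_spectrum Real.exp a ha]
    exact ⟨x, hx, rfl⟩
  simpa [abs_of_pos (Real.exp_pos x)] using spectrum.norm_le_norm_of_mem hmem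

variable [PartialOrder 𝔸] [StarOrderedRing 𝔸]

theorem IsSelfAdjoint.norm_exp_le {a : 𝔸} (ha : IsSelfAdjoint a) {c : ℝ}
    (h : a ≤ algebraMap ℝ 𝔸 c) : ‖NormedSpace.exp a‖ ≤ Real.exp c := by
  rw [CStarAlgebra.norm_le_iff_le_algebraMap _ (Real.exp_nonneg c) ha.exp_nonneg,
    le_algebraMap_iff_spectrum_le ha.exp, ← CFC.real_exp_eq_normedSpace_exp ha,
    cfc_map_spectrum Real.exp a ha]
  rintro _ ⟨x, hx, rfl⟩
  exact Real.exp_le_exp.mpr ((le_algebraMap_iff_spectrum_le ha).mp h x hx)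

theorem smul_le_algebraMap_mul {a : 𝔸} {c s : ℝ} (h : a ≤ algebraMap ℝ 𝔸 c) (hs : 0 ≤ s) :
    s • a ≤ algebraMap ℝ 𝔸 (s * c) := by
  rw [map_mul, ← Algebra.smul_def]
  exact smul_le_smul_of_nonneg_left h hs

theorem IsSelfAdjoint.le_algebraMap_add_of_norm_sub_le {a b : 𝔸} (ha : IsSelfAdjoint a)
    (hb : IsSelfAdjoint b) {c ε : ℝ} (h : a ≤ algebraMap ℝ 𝔸 c) (hba : ‖b - a‖ ≤ ε) :
    b ≤ algebraMap ℝ 𝔸 (c + ε) :=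
  calc b = a + (b - a) := (add_sub_cancel a b).symm
    _ ≤ algebraMap ℝ 𝔸 c + algebraMap ℝ 𝔸 ε :=
      add_le_add h <| (hb.sub ha).le_algebraMap_norm_self.trans (algebraMap_mono 𝔸 hba)
    _ = algebraMap ℝ 𝔸 (c + ε) := (map_add _ _ _).symm

theorem IsSelfAdjoint.norm_exp_sub_exp_le {a b : 𝔸} (ha : IsSelfAdjoint a)
    (hb : IsSelfAdjoint b) {c ε : ℝ} (h : a ≤ algebraMap ℝ 𝔸 c) (hba : ‖b - a‖ ≤ ε) :
    ‖NormedSpace.exp b - NormedSpace.exp a‖ ≤ ε * Real.exp (c + ε) := by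
  have hb_le := ha.le_algebraMap_add_of_norm_sub_le hb h hba
  have hε : 0 ≤ ε := (norm_nonneg _).trans hba
  calc _ ≤ ‖b - a‖ * Real.exp (c + ε) := _root_.norm_exp_sub_exp_le fun s ⟨hs0, hs1⟩ =>
        calc _ ≤ Real.exp (s * (c + ε)) * Real.exp ((1 - s) * c) := by
              gcongr
              · exact ((IsSelfAdjoint.all s).smul hb).norm_exp_le
                  (smul_le_algebraMap_mul hb_le hs0)
              · exact ((IsSelfAdjoint.all _).smul ha).norm_exp_le
                  (smul_le_algebraMap_mul h (by linarith))
          _ ≤ Real.exp (c + ε) := by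
              rw [← Real.exp_add]
              exact Real.exp_le_exp.mpr (by nlinarith)
    _ ≤ ε * Real.exp (c + ε) := by gcongr

/-- `selfAdjointExpDeviation a ε / ε` is the quotient whose limit as `ε → 0⁺` is the structured
level-1 condition number of `exp` at `a`. -/
noncomputable def selfAdjointExpDeviation (a : 𝔸) (ε : ℝ) : ℝ :=
  sSup {r : ℝ | ∃ b : 𝔸, IsSelfAdjoint b ∧ ‖b - a‖ ≤ ε ∧
    r = ‖NormedSpace.exp b - NormedSpace.exp a‖}

theorem IsSelfAdjoint.selfAdjointExpDeviation_le {a : 𝔸} (ha : IsSelfAdjoint a) {c ε : ℝ}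
    (h : a ≤ algebraMap ℝ 𝔸 c) (hε : 0 ≤ ε) :
    selfAdjointExpDeviation a ε ≤ ε * Real.exp (c + ε) :=
  csSup_le ⟨_, a, ha, by simpa using hε, rfl⟩ fun _ ⟨_, hb, hba, hr⟩ =>
    hr ▸ ha.norm_exp_sub_exp_le hb h hba

theorem IsSelfAdjoint.le_selfAdjointExpDeviation [Nontrivial 𝔸] {a : 𝔸} (ha : IsSelfAdjoint a)
    {ε : ℝ} (hε : 0 ≤ ε) :
    (Real.exp ε - 1) * ‖NormedSpace.exp a‖ ≤ selfAdjointExpDeviation a ε := by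
  refine le_csSup ⟨ε * Real.exp (‖a‖ + ε), fun _ ⟨_, hb, hba, hr⟩ =>
    hr ▸ ha.norm_exp_sub_exp_le hb ha.le_algebraMap_norm_self hba⟩
    ⟨a + algebraMap ℝ 𝔸 ε, ha.add (.algebraMap 𝔸 (.all ε)), ?_, ?_⟩
  · simp [abs_of_nonneg hε]
  · rw [norm_exp_add_algebraMap_sub_exp, abs_of_nonneg (by linarith [Real.add_one_le_exp ε])]

theorem IsSelfAdjoint.tendsto_selfAdjointExpDeviation_div [Nontrivial 𝔸] {a : 𝔸}
    (ha : IsSelfAdjoint a) :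
    Tendsto (fun ε => selfAdjointExpDeviation a ε / ε) (𝓝[>] 0)
      (𝓝 (Real.exp (sSup (spectrum ℝ a)))) := by
  set l := sSup (spectrum ℝ a)
  have hcompact := ContinuousFunctionalCalculus.isCompact_spectrum (R := ℝ) a
  have hl : l ∈ spectrum ℝ a :=
    hcompact.sSup_mem (ContinuousFunctionalCalculus.spectrum_nonempty a ha)
  have ha_le : a ≤ algebraMap ℝ 𝔸 l :=
    (le_algebraMap_iff_spectrum_le ha).mpr fun _ hx => le_csSup hcompact.bddAbove hx
  have hnorm : ‖NormedSpace.exp a‖ = Real.exp l :=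
    le_antisymm (ha.norm_exp_le ha_le) (ha.exp_le_norm_exp hl)
  have hlower :
      Tendsto (fun ε => (Real.exp ε - 1) / ε * Real.exp l) (𝓝[>] 0) (𝓝 (Real.exp l)) := by
    simpa using
      (Real.tendsto_exp_sub_one_div.mono_left (nhdsGT_le_nhdsNE 0)).mul_const (Real.exp l)
  have hupper : Tendsto (fun ε => Real.exp (l + ε)) (𝓝[>] 0) (𝓝 (Real.exp l)) :=
    ((continuous_const.add continuous_id).rexp.tendsto' 0 _ (by simp [l])).mono_left
      nhdsWithin_le_nhds
  refine tendsto_of_tendsto_of_tendsto_of_le_of_le' hlower hupper ?_ ?_ <;>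
    filter_upwards [self_mem_nhdsWithin] with ε (hε : 0 < ε)
  · rw [div_mul_eq_mul_div, ← hnorm]
    exact div_le_div_of_nonneg_right (ha.le_selfAdjointExpDeviation hε.le) hε.le
  · rw [div_le_iff₀ hε, mul_comm]
    exact ha.selfAdjointExpDeviation_le ha_le hε.le

end CStarAlgebra

/-- level-1 assertion in the proof of Proposition 3.3 of the paper. The
structured level-1 condition number of the matrix exponential at a Hermitian matrix `A`, in the
spectral norm and with Hermitian perturbations, equals `e^{λmax(A)}`. -/
theorem structured_level1_condition_number_exp_hermitian
    (n : ℕ) (hn : 1 ≤ n)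
    (A : Matrix (Fin n) (Fin n) ℂ) (hA : A.IsHermitian) :
    Tendsto (fun ε : ℝ =>
        (sSup {r : ℝ | ∃ Y : Matrix (Fin n) (Fin n) ℂ, Y.IsHermitian ∧ ‖Y - A‖ ≤ ε ∧
          r = ‖NormedSpace.exp Y - NormedSpace.exp A‖}) / ε)
      (𝓝[>] 0) (𝓝 (Real.exp (⨆ i, hA.eigenvalues i))) := by
  have : Nonempty (Fin n) := ⟨⟨0, hn⟩⟩
  have h := IsSelfAdjoint.tendsto_selfAdjointExpDeviation_div
    (𝔸 := Matrix (Fin n) (Fin n) ℂ) hA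
  rwa [hA.spectrum_real_eq_range_eigenvalues] at h
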